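/- Let G be the dihedral group of order 8, W the 7-dimensional sum-zero subrepresentation of its complex left regular representation, and Sym²W its symmetric square. Let ρ : G → GL₂(ℂ) be the 2-dimensional irreducible representation determined by ρ(r) = [[i, 0], [0, −i]] and ρ(s) = [[0, 1], [1, 0]] (where i is the imaginary unit, r a generating rotation and s a reflection). Then the complex vector space of linear maps f : Sym²W → ℂ² satisfying f(g • x) = ρ(g)(f(x)) for all g ∈ G and x ∈ Sym²W has dimension 6. -/

import Mathlib

open scoped TensorProduct

set_option synthInstance.maxHeartbeats 1000000
set_option maxHeartbeats 1000000

/-- The left regular action of `g` on functions `DihedralGroup 4 → ℂ`: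
`(reg g f) x = f (g⁻¹ * x)`. -/
noncomputable def reg (g : DihedralGroup 4) :
    (DihedralGroup 4 → ℂ) →ₗ[ℂ] (DihedralGroup 4 → ℂ) :=
  LinearMap.funLeft ℂ ℂ (fun x => g⁻¹ * x)

/-- The subspace of sum-zero functions: the regular representation minus the
trivial representation; it is 7-dimensional. -/
noncomputable def W : Submodule ℂ (DihedralGroup 4 → ℂ) :=
  LinearMap.ker (∑ x : DihedralGroup 4, LinearMap.proj x :
    (DihedralGroup 4 → ℂ) →ₗ[ℂ] ℂ)

lemma reg_mem_W (g : DihedralGroup 4) {f : DihedralGroup 4 → ℂ} (hf : f ∈ W) :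
    reg g f ∈ W := by
  simp only [W, LinearMap.mem_ker, LinearMap.sum_apply, LinearMap.proj_apply] at hf ⊢
  calc ∑ x : DihedralGroup 4, reg g f x
      = ∑ x : DihedralGroup 4, f x :=
        Fintype.sum_equiv (Equiv.mulLeft g⁻¹) _ _ (fun x => rfl)
    _ = 0 := hf

/-- The action of `g` on `W`. -/
noncomputable def regW (g : DihedralGroup 4) : W →ₗ[ℂ] W :=
  (reg g).restrict (fun _ hf => reg_mem_W g hf)

noncomputable instance : AddCommGroup (↥W ⊗[ℂ] ↥W) := TensorProduct.addCommGroup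

/-- The diagonal action of `g` on `W ⊗ W`. -/
noncomputable def tenAct (g : DihedralGroup 4) : (↥W ⊗[ℂ] ↥W) →ₗ[ℂ] (↥W ⊗[ℂ] ↥W) :=
  TensorProduct.map (regW g) (regW g)

/-- The subspace of `W ⊗ W` spanned by the elements `x ⊗ y - y ⊗ x`. -/
noncomputable def symRel : Submodule ℂ (↥W ⊗[ℂ] ↥W) :=
  Submodule.span ℂ {z | ∃ x y : W, z = x ⊗ₜ[ℂ] y - y ⊗ₜ[ℂ] x}

/-- The symmetric square `Sym² W`: the quotient of `W ⊗ W` by the span of the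
elements `x ⊗ y - y ⊗ x`. -/
noncomputable abbrev Sym2W : Type := (↥W ⊗[ℂ] ↥W) ⧸ symRel

lemma symRel_le (g : DihedralGroup 4) : symRel ≤ symRel.comap (tenAct g) := by
  rw [symRel, Submodule.span_le]
  rintro z ⟨x, y, rfl⟩
  simp only [Submodule.mem_comap, map_sub, tenAct, TensorProduct.map_tmul]
  exact Submodule.subset_span ⟨regW g x, regW g y, rfl⟩

/-- The induced action of `g` on `Sym² W`. -/
noncomputable def symAct (g : DihedralGroup 4) : Sym2W →ₗ[ℂ] Sym2W :=
  Submodule.mapQ symRel symRel (tenAct g) (symRel_le g)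

/-- The 2-dimensional irreducible representation of `DihedralGroup 4`, with
`ρ(r) = [[i, 0], [0, -i]]` and `ρ(s) = [[0, 1], [1, 0]]`, so that
`ρ(r^i) = ρ(r)^i` and `ρ(s r^i) = ρ(s) ρ(r)^i`. -/
noncomputable def rho : DihedralGroup 4 → Matrix (Fin 2) (Fin 2) ℂ
  | .r i => !![Complex.I ^ i.val, 0; 0, (-Complex.I) ^ i.val]
  | .sr i => !![0, (-Complex.I) ^ i.val; Complex.I ^ i.val, 0]

/-- The space of `ρ`-equivariant linear maps `Sym² W → ℂ²`. -/
noncomputable def eqMapsRho : Submodule ℂ (Sym2W →ₗ[ℂ] (Fin 2 → ℂ)) where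
  carrier := {f | ∀ (g : DihedralGroup 4) (x : Sym2W),
    f (symAct g x) = (rho g).mulVec (f x)}
  add_mem' := by
    intro a b ha hb g x
    simp only [LinearMap.add_apply, ha g x, hb g x, Matrix.mulVec_add]
  zero_mem' := by
    intro g x
    simp [Matrix.mulVec_zero]
  smul_mem' := by
    intro c f hf g x
    simp only [LinearMap.smul_apply, hf g x, Matrix.mulVec_smul]

/-!
By character theory, `finrank eqMapsRho = |G|⁻¹ ∑_g χ_{Sym²W}(g⁻¹) χ_ρ(g)`.
The character of `ρ` vanishes off the centre `{1, r²}`, where it is `±2`. Since `W` is the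
regular representation minus the trivial one, `χ_W` is `7` at `1` and `-1` elsewhere, and
`χ_{Sym²W}(g) = (χ_W(g)² + χ_W(g²)) / 2` gives `28` at `1` and `4` at `r²`.
Hence the dimension is `(2 · 28 - 2 · 4) / 8 = 6`.
-/

open LinearMap (trace)

section Trace

variable {k M : Type*} [Field k] [AddCommGroup M] [Module k M] [FiniteDimensional k M]

theorem LinearMap.trace_restrict_eq_trace_comp {q : Submodule k M} {π F : M →ₗ[k] M}
    (hπ : IsProj q π) (hF : ∀ x ∈ q, F x ∈ q) :
    trace k q (F.restrict hF) = trace k M (F ∘ₗ π) := by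
  have : F.restrict hF = π.codRestrict q hπ.map_mem ∘ₗ F ∘ₗ q.subtype := by
    ext x
    exact (hπ.map_id _ (hF x x.2)).symm
  rw [this, trace_comp_comm']
  rfl

theorem LinearMap.trace_restrict_ker {φ : Module.Dual k M} {v : M} (hv : φ v = 1)
    {F : M →ₗ[k] M} (hF : ∀ x ∈ ker φ, F x ∈ ker φ) :
    trace k (ker φ) (F.restrict hF) = trace k M F - φ (F v) := by
  have hπ : IsProj (ker φ) (id - φ.smulRight v) :=
    ⟨fun x => by simp [hv], fun x hx => by simp [mem_ker.mp hx]⟩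
  have hFπ : F ∘ₗ φ.smulRight v = φ.smulRight (F v) := LinearMap.ext fun x => by simp
  rw [trace_restrict_eq_trace_comp hπ, comp_sub, map_sub, comp_id, hFπ, trace_smulRight]

theorem LinearMap.trace_mapQ_eq_trace_comp {S : Submodule k M} {π F : M →ₗ[k] M}
    (hπS : S ≤ ker π) (hπ : ∀ z, z - π z ∈ S) (hF : S ≤ S.comap F) :
    trace k (M ⧸ S) (S.mapQ S F hF) = trace k M (F ∘ₗ π) := by
  -- `π` induces a section `S.liftQ π` of the quotient map.
  have : S.mapQ S F hF = S.mkQ ∘ₗ F ∘ₗ S.liftQ π hπS := by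
    ext z
    simpa [Submodule.Quotient.eq, ← map_sub] using hF (hπ z)
  rw [this, trace_comp_comm', comp_assoc, Submodule.liftQ_mkQ]

end Trace

namespace TensorProduct

variable {k M : Type*} [Field k] [AddCommGroup M] [Module k M]

theorem trace_map_comp_comm [FiniteDimensional k M] (A B : M →ₗ[k] M) :
    trace k (M ⊗[k] M) (map A B ∘ₗ (TensorProduct.comm k M M).toLinearMap) =
      trace k M (A ∘ₗ B) := by
  let b := Module.Free.chooseBasis k M
  rw [LinearMap.trace_eq_matrix_trace k (b.tensorProduct b), LinearMap.trace_eq_matrix_trace k b,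
    LinearMap.toMatrix_comp b b b]
  simp only [Matrix.trace, Matrix.diag, Matrix.mul_apply, Fintype.sum_prod_type,
    LinearMap.toMatrix_apply, Module.Basis.tensorProduct_apply, LinearMap.comp_apply,
    LinearEquiv.coe_coe, comm_tmul, map_tmul, Module.Basis.tensorProduct_repr_tmul_apply]
  exact Finset.sum_congr rfl fun i _ => Finset.sum_congr rfl fun j _ => mul_comm _ _

variable (k M) in
def antisymmSpan : Submodule k (M ⊗[k] M) :=
  Submodule.span k {z | ∃ x y : M, z = x ⊗ₜ[k] y - y ⊗ₜ[k] x}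

theorem sub_comm_mem_antisymmSpan (z : M ⊗[k] M) :
    z - TensorProduct.comm k M M z ∈ antisymmSpan k M := by
  induction z using TensorProduct.induction_on with
  | zero => simp
  | tmul x y => exact Submodule.subset_span ⟨x, y, rfl⟩
  | add a b ha hb =>
    rw [map_add, add_sub_add_comm]
    exact add_mem ha hb

theorem trace_mapQ_antisymmSpan [FiniteDimensional k M] [NeZero (2 : k)] (A : M →ₗ[k] M)
    (hA : antisymmSpan k M ≤ (antisymmSpan k M).comap (map A A)) :
    trace k (M ⊗[k] M ⧸ antisymmSpan k M) ((antisymmSpan k M).mapQ _ (map A A) hA) =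
      2⁻¹ * (trace k M A * trace k M A + trace k M (A ∘ₗ A)) := by
  let τ := (TensorProduct.comm k M M).toLinearMap
  let sym : M ⊗[k] M →ₗ[k] M ⊗[k] M := (2 : k)⁻¹ • (LinearMap.id + τ)
  have hker : antisymmSpan k M ≤ LinearMap.ker sym := by
    rw [antisymmSpan, Submodule.span_le]
    rintro _ ⟨x, y, rfl⟩
    simp [sym, τ, smul_sub]
  have hsub (z : M ⊗[k] M) : z - sym z ∈ antisymmSpan k M := by
    have : z - sym z = (2 : k)⁻¹ • (z - τ z) := by
      simp only [sym, LinearMap.smul_apply, LinearMap.add_apply, LinearMap.id_apply]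
      linear_combination (norm := module) -((inv_mul_cancel₀ (two_ne_zero' k)) • z)
    rw [this]
    exact Submodule.smul_mem _ _ (sub_comm_mem_antisymmSpan z)
  rw [LinearMap.trace_mapQ_eq_trace_comp hker hsub, LinearMap.comp_smul, LinearMap.comp_add,
    LinearMap.comp_id, map_smul, map_add, LinearMap.trace_tensorProduct', trace_map_comp_comm,
    smul_eq_mul]

end TensorProduct

theorem LinearMap.trace_funLeft {R ι : Type*} [CommRing R] [Fintype ι] [DecidableEq ι]
    (f : ι → ι) :
    trace R (ι → R) (funLeft R R f) = (Finset.univ.filter fun i => f i = i).card := by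
  rw [trace_eq_matrix_trace R (Pi.basisFun R ι), Matrix.trace, ← Finset.sum_boole]
  refine Finset.sum_congr rfl fun i _ => ?_
  simp [funLeft_apply, Pi.single_apply]

theorem ZMod.pow_val_add {M : Type*} [Monoid M] {n : ℕ} [NeZero n] {u : M} (hu : u ^ n = 1)
    (a b : ZMod n) : u ^ (a + b).val = u ^ a.val * u ^ b.val := by
  rw [ZMod.val_add, ← pow_eq_pow_mod _ hu, pow_add]

theorem ZMod.pow_val_neg {M : Type*} [CommMonoid M] {n : ℕ} [NeZero n] {u v : M}
    (hu : u ^ n = 1) (huv : u * v = 1) (a : ZMod n) : u ^ (-a).val = v ^ a.val :=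
  calc u ^ (-a).val = u ^ (-a).val * (u * v) ^ a.val := by rw [huv, one_pow, mul_one]
    _ = u ^ (-a + a).val * v ^ a.val := by rw [mul_pow, ← mul_assoc, ZMod.pow_val_add hu]
    _ = v ^ a.val := by rw [neg_add_cancel, ZMod.val_zero, pow_zero, one_mul]

theorem rho_mul (g h : DihedralGroup 4) : rho (g * h) = rho g * rho h := by
  have hI : Complex.I ^ 4 = 1 := Complex.I_pow_four
  have hnI : (-Complex.I) ^ 4 = 1 := by rw [neg_pow, hI]; norm_num
  have hInI : Complex.I * -Complex.I = 1 := by simp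
  have hnII : -Complex.I * Complex.I = 1 := by simp
  rcases g with i | i <;> rcases h with j | j <;>
    simp [rho, sub_eq_add_neg, ZMod.pow_val_add hI, ZMod.pow_val_add hnI,
      ZMod.pow_val_neg hI hInI, ZMod.pow_val_neg hnI hnII, mul_comm]

theorem rho_one : rho 1 = 1 := by
  show rho (.r 0) = 1
  simp [rho, Matrix.one_fin_two]

open Representation

noncomputable def rhoRep : Representation ℂ (DihedralGroup 4) (Fin 2 → ℂ) where
  toFun g := Matrix.toLin' (rho g)
  map_one' := by rw [rho_one, Matrix.toLin'_one]; rfl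
  map_mul' g h := by rw [rho_mul, Matrix.toLin'_mul]; rfl

noncomputable def regRep : Representation ℂ (DihedralGroup 4) (DihedralGroup 4 → ℂ) where
  toFun := reg
  map_one' := LinearMap.ext fun f => funext fun x => by simp [reg]
  map_mul' g h := LinearMap.ext fun f => funext fun x => by simp [reg, mul_assoc]

noncomputable def repW : Representation ℂ (DihedralGroup 4) W :=
  regRep.subrepresentation W fun g _ hf => reg_mem_W g hf

noncomputable def symRep : Representation ℂ (DihedralGroup 4) Sym2W :=
  (repW.tprod repW).quotient symRel symRel_le

theorem eqMapsRho_eq_invariants : eqMapsRho = (linHom symRep rhoRep).invariants := by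
  ext f
  simp only [mem_invariants, linHom_apply, mem_linHom_invariants_iff_isIntertwining,
    isIntertwiningMap_iff]
  rfl

theorem character_regRep (g : DihedralGroup 4) :
    regRep.character g = if g = 1 then 8 else 0 := by
  rw [character, show regRep g = reg g from rfl, reg, LinearMap.trace_funLeft]
  split_ifs with hg
  · simp [hg, DihedralGroup.card]
  · simp [hg]

theorem character_repW (g : DihedralGroup 4) :
    repW.character g = if g = 1 then 7 else -1 := by
  have hv : (∑ x : DihedralGroup 4, LinearMap.proj x : (DihedralGroup 4 → ℂ) →ₗ[ℂ] ℂ)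
      (fun _ => 8⁻¹) = 1 := by simp [DihedralGroup.card]
  calc repW.character g = regRep.character g - _ :=
        LinearMap.trace_restrict_ker hv fun _ hf => reg_mem_W g hf
    _ = _ := by
      rw [character_regRep, show reg g (fun _ => 8⁻¹) = fun _ => 8⁻¹ from rfl, hv]
      split_ifs <;> norm_num

theorem character_symRep (g : DihedralGroup 4) :
    symRep.character g =
      2⁻¹ * (repW.character g * repW.character g + repW.character (g * g)) := by
  rw [character, character, character, map_mul, Module.End.mul_eq_comp]
  -- `symRel` is `antisymmSpan ℂ W` and `symRep g` is induced by `map (repW g) (repW g)`,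
  -- both by definition.
  exact TensorProduct.trace_mapQ_antisymmSpan (repW g) (symRel_le g)

theorem character_symRep_one : symRep.character 1 = 28 := by
  rw [character_symRep, mul_one, character_repW]
  norm_num

theorem character_symRep_r_two : symRep.character (.r 2) = 4 := by
  rw [character_symRep, DihedralGroup.r_mul_r, character_repW, character_repW,
    if_neg (by decide), if_pos (by decide)]
  norm_num

theorem character_rhoRep (g : DihedralGroup 4) : rhoRep.character g = (rho g).trace :=
  Matrix.trace_toLin'_eq (rho g)

theorem character_rhoRep_r_two : rhoRep.character (.r 2) = -2 := by
  norm_num [character_rhoRep, rho, Matrix.trace_fin_two, show (2 : ZMod 4).val = 2 from rfl]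

theorem character_rhoRep_eq_zero {g : DihedralGroup 4} (h1 : g ≠ 1) (h2 : g ≠ .r 2) :
    rhoRep.character g = 0 := by
  rw [character_rhoRep]
  rcases g with i | i
  · fin_cases i
    · exact absurd rfl h1
    · simp [rho, Matrix.trace_fin_two, ZMod.val]
    · exact absurd rfl h2
    · simp [rho, Matrix.trace_fin_two, ZMod.val, pow_succ]
  · simp [rho, Matrix.trace_fin_two]

theorem sum_character_symRep_inv_mul_character_rhoRep :
    ∑ g, symRep.character g⁻¹ * rhoRep.character g = 48 := by
  rw [Fintype.sum_eq_add 1 (.r 2) (by decide) fun g hg => by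
    rw [character_rhoRep_eq_zero hg.1 hg.2, mul_zero]]
  rw [inv_one, show (DihedralGroup.r 2 : DihedralGroup 4)⁻¹ = .r 2 from rfl,
    character_symRep_one, character_symRep_r_two, char_one, character_rhoRep_r_two]
  norm_num

/-- The multiplicity of the 2-dimensional irreducible representation `ρ` in
`Sym² W` is 6: the space of `ρ`-equivariant maps `Sym² W → ℂ²` has dimension 6. -/
theorem finrank_eqMapsRho_eq_six : Module.finrank ℂ eqMapsRho = 6 := by
  have h := card_inv_mul_sum_char_eq_finrank (linHom symRep rhoRep)
  simp_rw [char_linHom] at h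
  rw [sum_character_symRep_inv_mul_character_rhoRep, ← eqMapsRho_eq_invariants,
    Nat.card_eq_fintype_card, DihedralGroup.card] at h
  norm_num at h
  exact_mod_cast h.symm
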